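/- Fix n and 1 ≤ p ≤ 2n-3 (the OG(2,2n) setting). Let γ, δ be (n-2)-strict partitions in a 2 × (2n-3) rectangle with |δ| = |γ| + p and γ → δ. If |δ| ≤ 2n-4 or |γ| > 2n-4, then γ ⊆ δ. -/
import Mathlib


/-- The boxes of a two-row Young diagram with row lengths `g1, g2`
(box `(r,c)` in row `r ∈ {1,2}`, column `c ≥ 1`). -/
def bx (g1 g2 : ℕ) : Finset (ℕ × ℕ) :=
  ((Finset.Icc 1 g1).image fun c => (1, c)) ∪ ((Finset.Icc 1 g2).image fun c => (2, c))

/-- Box `(r,c)` is related to `(r',c')` iff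
`|c - (2n-3)/2| + r = |c' - (2n-3)/2| + r'` (type D relatedness for
`OG(2,2n)`), written with both sides doubled to stay in `ℤ`. -/
abbrev relD (n : ℕ) (b b' : ℕ × ℕ) : Prop :=
  |2 * (b.2 : ℤ) - (2 * (n : ℤ) - 3)| + 2 * b.1 =
    |2 * (b'.2 : ℤ) - (2 * (n : ℤ) - 3)| + 2 * b'.1

/-- The Pieri relation `γ → δ` for `OG(2,2n)`: `δ` is obtained from `γ` by
removing a vertical strip from the first `n-2` columns and adding a horizontal
strip, such that (1) each `γ`-box in the first `n-2` columns having no `δ`-box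
below it is related to at most one `(δ∖γ)`-box, and (2) any `(γ∖δ)`-box and
the box above it are each related to exactly one `(δ∖γ)`-box, all these
`(δ∖γ)`-boxes lying in the same row. -/
def PieriRelD (n g1 g2 d1 d2 : ℕ) : Prop :=
  g1 ≤ d1 + 1 ∧ g2 ≤ d2 + 1 ∧
  (d1 < g1 → g1 ≤ n - 2) ∧ (d2 < g2 → g2 ≤ n - 2) ∧
  d2 ≤ g1 ∧
  (∀ b ∈ bx g1 g2, b.2 ≤ n - 2 → (b.1 + 1, b.2) ∉ bx d1 d2 →
    ((bx d1 d2 \ bx g1 g2).filter (relD n b)).card ≤ 1) ∧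
  (∀ b ∈ bx g1 g2 \ bx d1 d2,
    ((bx d1 d2 \ bx g1 g2).filter (relD n b)).card = 1 ∧
    (b.1 = 2 → ((bx d1 d2 \ bx g1 g2).filter (relD n (1, b.2))).card = 1)) ∧
  (∃ ρ, ∀ b ∈ bx g1 g2 \ bx d1 d2, ∀ a ∈ bx d1 d2 \ bx g1 g2,
    (relD n b a ∨ (b.1 = 2 ∧ relD n (1, b.2) a)) → a.1 = ρ)

lemma mem_bx (g1 g2 : ℕ) (b : ℕ × ℕ) :
    b ∈ bx g1 g2 ↔ (b.1 = 1 ∧ 1 ≤ b.2 ∧ b.2 ≤ g1) ∨ (b.1 = 2 ∧ 1 ≤ b.2 ∧ b.2 ≤ g2) := by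
  simp only [bx, Finset.mem_union, Finset.mem_image, Finset.mem_Icc, Prod.ext_iff]
  aesop

/-- Fix `n` and `1 ≤ p ≤ 2n-3` (the `OG(2,2n)` setting).  Let
`γ, δ` be `(n-2)`-strict partitions in a `2 × (2n-3)` rectangle with
`|δ| = |γ| + p` and `γ → δ`.  If `|δ| ≤ 2n-4` or `|γ| > 2n-4`, then
`γ ⊆ δ`. -/
theorem stmt18 (n p : ℕ) (hn : 2 ≤ n) (hp1 : 1 ≤ p) (hp2 : p ≤ 2 * n - 3)
    (g1 g2 d1 d2 : ℕ)
    (hg : g2 ≤ g1) (hg1 : g1 ≤ 2 * n - 3) (hgs : n - 2 < g1 → g2 < g1)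
    (hd : d2 ≤ d1) (hd1 : d1 ≤ 2 * n - 3) (hds : n - 2 < d1 → d2 < d1)
    (hsize : d1 + d2 = g1 + g2 + p)
    (hrel : PieriRelD n g1 g2 d1 d2)
    (hcase : d1 + d2 ≤ 2 * n - 4 ∨ 2 * n - 4 < g1 + g2) :
    g1 ≤ d1 ∧ g2 ≤ d2 := by
  obtain ⟨h1, h2, h3, h4, h5, h6, h7, h8⟩ := hrel
  have hA : g1 ≤ d1 := by
    by_contra hlt
    push_neg at hlt
    have hg1n : g1 ≤ n - 2 := h3 hlt
    have hb : (1, g1) ∈ bx g1 g2 \ bx d1 d2 := by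
      simp [Finset.mem_sdiff, mem_bx]
      omega
    have hcard := (h7 _ hb).1
    obtain ⟨a, ha⟩ := Finset.card_pos.mp (hcard ▸ Nat.one_pos)
    rw [Finset.mem_filter, Finset.mem_sdiff, mem_bx, mem_bx] at ha
    obtain ⟨⟨hin, hnin⟩, hr0⟩ := ha
    have hr : |2 * (g1 : ℤ) - (2 * (n : ℤ) - 3)| + 2 * 1 =
        |2 * (a.2 : ℤ) - (2 * (n : ℤ) - 3)| + 2 * a.1 := hr0
    rcases hin with ⟨e1, e2, e3⟩ | ⟨e1, e2, e3⟩
    · exact hnin (Or.inl ⟨e1, e2, by omega⟩)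
    · have e4 : ¬ a.2 ≤ g2 := fun h => hnin (Or.inr ⟨e1, e2, h⟩)
      rcases abs_cases (2 * (g1 : ℤ) - (2 * (n : ℤ) - 3)) with ⟨he1, hs1⟩ | ⟨he1, hs1⟩ <;>
        rcases abs_cases (2 * (a.2 : ℤ) - (2 * (n : ℤ) - 3)) with ⟨he2, hs2⟩ | ⟨he2, hs2⟩ <;>
          rw [he1, he2] at hr <;> omega
  have hB : g2 ≤ d2 := by
    by_contra hlt
    push_neg at hlt
    have hg2n : g2 ≤ n - 2 := h4 hlt
    have hb : (2, g2) ∈ bx g1 g2 \ bx d1 d2 := by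
      simp [Finset.mem_sdiff, mem_bx]
      omega
    obtain ⟨hc1, hc2⟩ := h7 _ hb
    have hc2 := hc2 rfl
    obtain ⟨a, ha⟩ := Finset.card_pos.mp (hc1 ▸ Nat.one_pos)
    obtain ⟨a', ha'⟩ := Finset.card_pos.mp (hc2 ▸ Nat.one_pos)
    rw [Finset.mem_filter, Finset.mem_sdiff, mem_bx, mem_bx] at ha ha'
    obtain ⟨⟨hin, hnin⟩, hr0⟩ := ha
    obtain ⟨⟨hin', hnin'⟩, hr0'⟩ := ha'
    have hr : |2 * (g2 : ℤ) - (2 * (n : ℤ) - 3)| + 2 * 2 =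
        |2 * (a.2 : ℤ) - (2 * (n : ℤ) - 3)| + 2 * a.1 := hr0
    have hr' : |2 * (g2 : ℤ) - (2 * (n : ℤ) - 3)| + 2 * 1 =
        |2 * (a'.2 : ℤ) - (2 * (n : ℤ) - 3)| + 2 * a'.1 := hr0'
    -- `a` has row 1 and column 2n-2-g2; `a'` has row 1 and column 2n-3-g2
    have ka : a.1 = 1 ∧ g1 < a.2 ∧ a.2 ≤ d1 := by
      rcases hin with ⟨e1, e2, e3⟩ | ⟨e1, e2, e3⟩
      · have e4 : ¬ a.2 ≤ g1 := fun h => hnin (Or.inl ⟨e1, e2, h⟩)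
        exact ⟨e1, by omega, e3⟩
      · exact absurd (Or.inr ⟨e1, e2, by omega⟩) hnin
    have ka' : a'.1 = 1 ∧ g1 < a'.2 ∧ a'.2 ≤ d1 := by
      rcases hin' with ⟨e1, e2, e3⟩ | ⟨e1, e2, e3⟩
      · have e4 : ¬ a'.2 ≤ g1 := fun h => hnin' (Or.inl ⟨e1, e2, h⟩)
        exact ⟨e1, by omega, e3⟩
      · exact absurd (Or.inr ⟨e1, e2, by omega⟩) hnin'
    rcases abs_cases (2 * (g2 : ℤ) - (2 * (n : ℤ) - 3)) with ⟨he1, hs1⟩ | ⟨he1, hs1⟩ <;>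
      rcases abs_cases (2 * (a.2 : ℤ) - (2 * (n : ℤ) - 3)) with ⟨he2, hs2⟩ | ⟨he2, hs2⟩ <;>
        rcases abs_cases (2 * (a'.2 : ℤ) - (2 * (n : ℤ) - 3)) with ⟨he3, hs3⟩ | ⟨he3, hs3⟩ <;>
          rw [he1, he2] at hr <;> rw [he1, he3] at hr' <;> omega
  exact ⟨hA, hB⟩
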